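/- In the simplicial setup, M_{in_≺(ker π)} = ∪_{n ∈ N₁∪N₂} M_{nS}; that is, a monomial of S lies in the initial ideal in_≺(ker π) if and only if it is divisible by some element of the finite set N₁ ∪ N₂. In particular, there exist n₁, …, n_r ∈ N₁ ∪ N₂ such that in_≺(ker π) = (n₁, …, n_r). -/

import Mathlib

namespace SimplicialToric

/-- `eVec d α i` is `α` times the `i`-th standard basis vector of `ℕ^d`. -/
def eVec (d α : ℕ) (i : Fin d) : Fin d → ℕ := fun j => if j = i then α else 0

/-- The Hilbert basis of a submonoid `B ⊆ ℕ^d`: the set of irreducible elements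
(in `ℕ^d` the only unit is `0`). -/
def Hilb {d : ℕ} (B : AddSubmonoid (Fin d → ℕ)) : Set (Fin d → ℕ) :=
  {b | b ∈ B ∧ b ≠ 0 ∧ ∀ x ∈ B, ∀ y ∈ B, b = x + y → x = 0 ∨ y = 0}

/-- The submonoid `A = Σᵢ ℤ≥0·eᵢ = αℤ≥0^d`. -/
def Amon (d α : ℕ) : AddSubmonoid (Fin d → ℕ) :=
  AddSubmonoid.closure (Set.range (eVec d α))

/-- `B_A = {x ∈ B : x − a ∉ B for every a ∈ A \ {0}}`. -/
def BA {d : ℕ} (B : AddSubmonoid (Fin d → ℕ)) (α : ℕ) : Set (Fin d → ℕ) :=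
  {x | x ∈ B ∧ ∀ z ∈ Amon d α, z ≠ 0 → ∀ y ∈ B, x ≠ y + z}

/-- The generators `a₁,…,a_c,e₁,…,e_d` of `B`, indexed by the variables of
`S = K[x₁,…,x_c,y₁,…,y_d]`; variable `Fin.castAdd d i` is `xᵢ`, variable
`Fin.natAdd c j` is `yⱼ`. -/
def gens (c d α : ℕ) (a : Fin c → Fin d → ℕ) : Fin (c + d) → Fin d → ℕ :=
  Fin.addCases a (eVec d α)

/-- The element of `B` represented by the monomial with exponent vector `σ`:
`π(x^μ y^ν) = t^(valE σ)`. -/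
def valE (c d α : ℕ) (a : Fin c → Fin d → ℕ) (σ : Fin (c + d) →₀ ℕ) : Fin d → ℕ :=
  ∑ v : Fin (c + d), σ v • gens c d α a v

/-- total degree of a monomial (exponent vector). -/
def degE {N : ℕ} (σ : Fin N →₀ ℕ) : ℕ := ∑ v, σ v

/-- the graded reverse lexicographic order: `grevlex σ τ` means `σ ≺ τ`,
i.e. `deg σ < deg τ`, or degrees agree and the last nonzero entry of `τ − σ`
is negative. -/
def grevlex {N : ℕ} (σ τ : Fin N →₀ ℕ) : Prop :=
  degE σ < degE τ ∨ (degE σ = degE τ ∧ ∃ k, τ k < σ k ∧ ∀ l, k < l → σ l = τ l)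

/-- `x ∼ y` iff `x − y ∈ gp(A) = αℤ^d`. -/
def Rel {d : ℕ} (α : ℕ) (x y : Fin d → ℕ) : Prop :=
  ∀ j, (α : ℤ) ∣ (x j : ℤ) - (y j : ℤ)

/-- `Γ` is an equivalence class of `B_A` modulo `αℤ^d`. -/
def IsClass {d : ℕ} (B : AddSubmonoid (Fin d → ℕ)) (α : ℕ) (Γ : Set (Fin d → ℕ)) : Prop :=
  ∃ x ∈ BA B α, Γ = {y | y ∈ BA B α ∧ Rel α x y}

/-- the total order on an equivalence class of `B_A`: `b ≺ c` iff the last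
nonzero entry of `b − c` is negative. -/
def ltCls {d : ℕ} (x y : Fin d → ℕ) : Prop :=
  ∃ k, x k < y k ∧ ∀ l, k < l → x l = y l

/-- `joinSub x y = x∨y − y`, where `x∨y` is the componentwise maximum. -/
def joinSub {d : ℕ} (x y : Fin d → ℕ) : Fin d → ℕ := fun j => max (x j) (y j) - y j

/-- the monomial with exponents `σ` lies in `T = K[y₁,…,y_d]`. -/
def yOnly (c d : ℕ) (σ : Fin (c + d) →₀ ℕ) : Prop := ∀ i : Fin c, σ (Fin.castAdd d i) = 0

/-- the monomial with exponents `σ` involves only the `x`-variables. -/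
def xOnly (c d : ℕ) (σ : Fin (c + d) →₀ ℕ) : Prop := ∀ j : Fin d, σ (Fin.natAdd c j) = 0

/-- the set `N₁`, for a given choice `m` of the minimal monomials `m_b`. -/
def N1set (c d α : ℕ) (a : Fin c → Fin d → ℕ) (B : AddSubmonoid (Fin d → ℕ))
    (m : (Fin d → ℕ) → (Fin (c + d) →₀ ℕ)) : Set (Fin (c + d) →₀ ℕ) :=
  {n | ∃ (i : Fin c) (b : Fin d → ℕ), b ∈ BA B α ∧
    n = Finsupp.single (Fin.castAdd d i) 1 + m b ∧ n ≠ m (a i + b)}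

/-- the set `N₂ = ∪_Γ N_Γ`, where `N_Γ = {n(bᵢ,bⱼ) = m_{bⱼ}·m_{bᵢ∨bⱼ−bⱼ} : bᵢ ≺ bⱼ in Γ}`. -/
def N2set {d : ℕ} (c α : ℕ) (B : AddSubmonoid (Fin d → ℕ))
    (m : (Fin d → ℕ) → (Fin (c + d) →₀ ℕ)) : Set (Fin (c + d) →₀ ℕ) :=
  {n | ∃ Γ, IsClass B α Γ ∧ ∃ bi ∈ Γ, ∃ bj ∈ Γ, ltCls bi bj ∧ n = m bj + m (joinSub bi bj)}

/-- `σ` is the exponent vector of the initial (i.e. `≺`-largest) term of `f`. -/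
def IsLeadMon {N : ℕ} {K : Type*} [Field K] (f : MvPolynomial (Fin N) K)
    (σ : Fin N →₀ ℕ) : Prop :=
  σ ∈ f.support ∧ ∀ τ ∈ f.support, τ = σ ∨ grevlex τ σ

/-- the initial ideal of `I` with respect to the graded reverse lexicographic order. -/
noncomputable def initialIdeal {N : ℕ} {K : Type*} [Field K] (I : Ideal (MvPolynomial (Fin N) K)) :
    Ideal (MvPolynomial (Fin N) K) :=
  Ideal.span {g | ∃ f ∈ I, ∃ σ, IsLeadMon f σ ∧ g = MvPolynomial.monomial σ (1 : K)}

end SimplicialToric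

open SimplicialToric

/-!
A monomial lies in `in_≺(ker π)` iff it is not the `≺`-least monomial of its fiber
`{τ | π(τ) = π(σ)}`, and fiber-minimality passes to divisors. No element of `N₁ ∪ N₂` is
fiber-minimal: `xᵢ·m_b ≠ m_{aᵢ+b}` by definition, and `m_{bᵢ}·m_{bᵢ∨bⱼ−bᵢ}` has the same weight
`bᵢ∨bⱼ` as `n(bᵢ, bⱼ) = m_{bⱼ}·m_{bᵢ∨bⱼ−bⱼ}` but is smaller, since it carries more of the last
`y`-variable at which `bᵢ` and `bⱼ` differ.

Conversely, let `σ = x^μ y^ν` be divisible by no element of `N₁ ∪ N₂`, and argue by induction on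
divisibility. If `ν = 0`, then `σ = xᵢ·σ'` with `σ' = m_b` fiber-minimal and `b ∈ B_A`, so
`σ = m_{aᵢ+b}` since `σ ∉ N₁`. Otherwise `x^μ` is fiber-minimal of weight `c ∈ B_A`; writing
`m_{π(σ)} = x^{μ'} y^{ν'}` with `x^{μ'}` of weight `c' ∈ B_A`, we get `c ∼ c'`. If `c = c'` then
`σ = m_{π(σ)}`; if `c ≺ c'` then `n(c, c')` divides the fiber-minimal `m_{π(σ)}`, and if `c' ≺ c`
then `n(c', c)` divides `σ`, both impossible.
-/

namespace SimplicialToric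

open MvPolynomial

section Orders

variable {N : ℕ}

theorem degE_add (σ τ : Fin N →₀ ℕ) : degE (σ + τ) = degE σ + degE τ := by
  simp [degE, Finset.sum_add_distrib]

theorem grevlex_asymm {σ τ : Fin N →₀ ℕ} (h₁ : grevlex σ τ) (h₂ : grevlex τ σ) : False := by
  rcases h₁ with h₁ | ⟨hd₁, k₁, hk₁, h₁⟩ <;> rcases h₂ with h₂ | ⟨hd₂, k₂, hk₂, h₂⟩
  · omega
  · omega
  · omega
  · rcases lt_trichotomy k₁ k₂ with h | rfl | h
    · have := h₁ k₂ h; omega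
    · omega
    · have := h₂ k₁ h; omega

theorem grevlex_irrefl (σ : Fin N →₀ ℕ) : ¬ grevlex σ σ := fun h => grevlex_asymm h h

theorem grevlex_add_right_iff {σ τ : Fin N →₀ ℕ} (ρ : Fin N →₀ ℕ) :
    grevlex (σ + ρ) (τ + ρ) ↔ grevlex σ τ := by
  simp [grevlex, degE_add]

theorem exists_last_ne {ι β : Type*} [LinearOrder ι] [Fintype ι] {f g : ι → β} (h : f ≠ g) :
    ∃ k, f k ≠ g k ∧ ∀ l, k < l → f l = g l := by
  classical
  have hne : (Finset.univ.filter fun k => f k ≠ g k).Nonempty := by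
    obtain ⟨k, hk⟩ := Function.ne_iff.mp h
    exact ⟨k, by simpa using hk⟩
  refine ⟨_, (Finset.mem_filter.mp (Finset.max'_mem _ hne)).2, fun l hl => ?_⟩
  by_contra hfl
  exact (Finset.le_max' _ l (by simpa using hfl)).not_gt hl

theorem ltCls_or_ltCls_of_ne {d : ℕ} {x y : Fin d → ℕ} (h : x ≠ y) : ltCls x y ∨ ltCls y x := by
  obtain ⟨k, hk, hl⟩ := exists_last_ne h
  rcases Nat.lt_or_gt_of_ne hk with h | h
  · exact Or.inl ⟨k, h, hl⟩
  · exact Or.inr ⟨k, h, fun l hkl => (hl l hkl).symm⟩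

theorem ltCls_of_le_of_ne {d : ℕ} {x y : Fin d → ℕ} (hle : x ≤ y) (hne : x ≠ y) : ltCls x y := by
  obtain ⟨k, hk, hl⟩ := exists_last_ne hne
  exact ⟨k, lt_of_le_of_ne (hle k) hk, hl⟩

theorem grevlex_or_grevlex_of_degE_eq {σ τ : Fin N →₀ ℕ} (hd : degE σ = degE τ) (hne : σ ≠ τ) :
    grevlex σ τ ∨ grevlex τ σ := by
  obtain ⟨k, hk, hl⟩ := exists_last_ne (DFunLike.coe_injective.ne hne)
  rcases Nat.lt_or_gt_of_ne hk with h | h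
  · exact Or.inr (Or.inr ⟨hd.symm, k, h, fun l hkl => (hl l hkl).symm⟩)
  · exact Or.inl (Or.inr ⟨hd, k, h, hl⟩)

end Orders

section FiberMin

variable {N : ℕ} {M : Type*}

def IsFiberMin (w : (Fin N →₀ ℕ) → M) (σ : Fin N →₀ ℕ) : Prop :=
  ∀ τ, w τ = w σ → ¬ grevlex τ σ

theorem IsFiberMin.of_le [Add M] {w : (Fin N →₀ ℕ) → M} (hw : ∀ σ τ, w (σ + τ) = w σ + w τ)
    {σ τ : Fin N →₀ ℕ} (hle : τ ≤ σ) (hσ : IsFiberMin w σ) : IsFiberMin w τ := by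
  obtain ⟨δ, rfl⟩ := le_iff_exists_add.mp hle
  intro ρ hρ hlt
  exact hσ (ρ + δ) (by rw [hw, hw, hρ]) ((grevlex_add_right_iff δ).mpr hlt)

end FiberMin

section InitialIdeal

variable {N : ℕ} {K : Type*} [Field K]

theorem isLeadMon_monomial_sub_monomial {σ τ : Fin N →₀ ℕ} (h : grevlex τ σ) :
    IsLeadMon (monomial σ (1 : K) - monomial τ 1) σ := by
  have hne : σ ≠ τ := fun he => grevlex_irrefl σ (he ▸ h)
  refine ⟨by simp [mem_support_iff, coeff_monomial, hne.symm], fun ρ hρ => ?_⟩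
  by_cases hρσ : ρ = σ
  · exact Or.inl hρσ
  · by_cases hρτ : ρ = τ
    · exact Or.inr (hρτ ▸ h)
    · simp [mem_support_iff, coeff_monomial, Ne.symm hρσ, Ne.symm hρτ] at hρ

theorem monomial_mem_initialIdeal_iff {I : Ideal (MvPolynomial (Fin N) K)} {σ : Fin N →₀ ℕ} :
    monomial σ (1 : K) ∈ initialIdeal I ↔ ∃ τ ≤ σ, ∃ f ∈ I, IsLeadMon f τ := by
  classical
  have hgen : initialIdeal I =
      Ideal.span ((fun τ => monomial τ (1 : K)) '' {τ | ∃ f ∈ I, IsLeadMon f τ}) := by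
    rw [initialIdeal]
    congr 1
    ext
    aesop
  rw [hgen, mem_ideal_span_monomial_image, support_monomial, if_neg one_ne_zero]
  simp only [Finset.mem_singleton, forall_eq, Set.mem_ofPred_eq]
  exact ⟨fun ⟨τ, hτ, hle⟩ => ⟨τ, hle, hτ⟩, fun ⟨τ, hle, hτ⟩ => ⟨τ, hτ, hle⟩⟩

theorem initialIdeal_eq_span_of_monomial_mem_iff {I : Ideal (MvPolynomial (Fin N) K)}
    {S : Set (Fin N →₀ ℕ)}
    (h : ∀ σ, monomial σ (1 : K) ∈ initialIdeal I ↔ ∃ n ∈ S, n ≤ σ) :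
    initialIdeal I = Ideal.span ((fun n => monomial n (1 : K)) '' S) := by
  classical
  apply le_antisymm
  · refine Ideal.span_le.mpr ?_
    rintro _ ⟨f, hf, σ, hl, rfl⟩
    obtain ⟨n, hn, hle⟩ := (h σ).mp (Ideal.subset_span ⟨f, hf, σ, hl, rfl⟩)
    rw [SetLike.mem_coe, mem_ideal_span_monomial_image, support_monomial, if_neg one_ne_zero]
    simpa using ⟨n, hn, hle⟩
  · refine Ideal.span_le.mpr ?_
    rintro _ ⟨n, hn, rfl⟩
    exact (h n).mpr ⟨n, hn, le_rfl⟩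

end InitialIdeal

theorem map_monomial_one_of_map_X {N : ℕ} {M K : Type*} [AddCommMonoid M] [Field K]
    {π : MvPolynomial (Fin N) K →ₐ[K] AddMonoidAlgebra K M} {g : Fin N → M}
    (hπ : ∀ v, π (X v) = AddMonoidAlgebra.of' K M (g v)) (σ : Fin N →₀ ℕ) :
    π (monomial σ 1) = AddMonoidAlgebra.single (∑ v, σ v • g v) 1 := by
  rw [monomial_eq, C_1, one_mul, map_finsuppProd, Finsupp.prod_fintype _ _ (by simp)]
  simp only [map_pow, hπ, AddMonoidAlgebra.of'_apply, AddMonoidAlgebra.single_pow, one_pow]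
  rw [AddMonoidAlgebra.prod_single, Finset.prod_const_one]

section Kernel

variable {N : ℕ} {M K : Type*} [AddMonoid M] [Field K]
  {π : MvPolynomial (Fin N) K →ₐ[K] AddMonoidAlgebra K M} {w : (Fin N →₀ ℕ) → M}

theorem exists_ne_weight_eq_of_map_eq_zero
    (hπ : ∀ σ, π (monomial σ 1) = AddMonoidAlgebra.single (w σ) 1)
    {f : MvPolynomial (Fin N) K} (hf : π f = 0) {σ : Fin N →₀ ℕ} (hσ : σ ∈ f.support) :
    ∃ τ ∈ f.support, τ ≠ σ ∧ w τ = w σ := by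
  by_contra! h
  have hsum : π f = ∑ τ ∈ f.support, AddMonoidAlgebra.single (w τ) (coeff τ f) := by
    conv_lhs => rw [f.as_sum]
    simp only [map_sum]
    refine Finset.sum_congr rfl fun τ _ => ?_
    rw [← mul_one (coeff τ f), ← smul_eq_mul, ← smul_monomial, map_smul, hπ,
      AddMonoidAlgebra.smul_single, smul_eq_mul, mul_one]
  have hcoeff := congrArg (fun p : AddMonoidAlgebra K M => p.coeff (w σ)) hsum
  simp only [hf, AddMonoidAlgebra.coeff_zero, AddMonoidAlgebra.coeff_sum,
    AddMonoidAlgebra.coeff_single, Finsupp.coe_zero, Pi.zero_apply, Finsupp.coe_finsetSum,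
    Finset.sum_apply] at hcoeff
  rw [Finset.sum_eq_single_of_mem σ hσ fun τ hτ hne => Finsupp.single_eq_of_ne (h τ hτ hne).symm,
    Finsupp.single_eq_same] at hcoeff
  exact mem_support_iff.mp hσ hcoeff.symm

theorem not_isFiberMin_of_isLeadMon
    (hπ : ∀ σ, π (monomial σ 1) = AddMonoidAlgebra.single (w σ) 1)
    {f : MvPolynomial (Fin N) K} (hf : π f = 0) {σ : Fin N →₀ ℕ} (hl : IsLeadMon f σ) :
    ¬ IsFiberMin w σ := fun hσ => by
  obtain ⟨τ, hτ, hne, hw⟩ := exists_ne_weight_eq_of_map_eq_zero hπ hf hl.1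
  exact hσ τ hw ((hl.2 τ hτ).resolve_left hne)

theorem monomial_mem_initialIdeal_ker_iff (hw : ∀ σ τ, w (σ + τ) = w σ + w τ)
    (hπ : ∀ σ, π (monomial σ 1) = AddMonoidAlgebra.single (w σ) 1) {σ : Fin N →₀ ℕ} :
    monomial σ (1 : K) ∈ initialIdeal (RingHom.ker π) ↔ ¬ IsFiberMin w σ := by
  rw [monomial_mem_initialIdeal_iff]
  constructor
  · rintro ⟨τ, hle, f, hf, hl⟩ hσ
    exact not_isFiberMin_of_isLeadMon hπ hf hl (hσ.of_le hw hle)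
  · intro hσ
    obtain ⟨τ, hw, hlt⟩ : ∃ τ, w τ = w σ ∧ grevlex τ σ := by
      simpa [IsFiberMin] using hσ
    refine ⟨σ, le_rfl, _, ?_, isLeadMon_monomial_sub_monomial hlt⟩
    rw [RingHom.mem_ker, map_sub, hπ, hπ, hw, sub_self]

end Kernel

theorem _root_.Ideal.exists_fin_span_image_eq {R ι : Type*} [CommRing R] [IsNoetherianRing R]
    (f : ι → R) (S : Set ι) :
    ∃ (r : ℕ) (ns : Fin r → ι), (∀ k, ns k ∈ S) ∧
      Ideal.span (f '' S) = Ideal.span (Set.range fun k => f (ns k)) := by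
  classical
  obtain ⟨t, htS, hspan⟩ := (Submodule.fg_span_iff_fg_span_finset_subset (f '' S)).mp
    (IsNoetherian.noetherian (Ideal.span (f '' S)))
  obtain ⟨s, hsS, rfl⟩ := Finset.subset_set_image_iff.mp htS
  obtain ⟨r, e, he⟩ := s.finite_toSet.fin_embedding
  refine ⟨r, e, fun k => hsS (he ▸ Set.mem_range_self k), ?_⟩
  change Submodule.span R _ = Submodule.span R _
  rw [hspan, Finset.coe_image, ← he, ← Set.range_comp]
  rfl

section Coordinates

variable {c d α : ℕ} {a : Fin c → Fin d → ℕ}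

/-- The exponent vector of `x^μ y^ν`. -/
noncomputable def mon (μ : Fin c → ℕ) (ν : Fin d → ℕ) : Fin (c + d) →₀ ℕ :=
  Finsupp.equivFunOnFinite.symm (Fin.append μ ν)

@[simp] theorem mon_castAdd (μ : Fin c → ℕ) (ν : Fin d → ℕ) (i : Fin c) :
    mon μ ν (Fin.castAdd d i) = μ i := by
  simp [mon]

@[simp] theorem mon_natAdd (μ : Fin c → ℕ) (ν : Fin d → ℕ) (j : Fin d) :
    mon μ ν (Fin.natAdd c j) = ν j := by
  simp [mon]

theorem exists_eq_mon (σ : Fin (c + d) →₀ ℕ) : ∃ μ ν, σ = mon μ ν :=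
  ⟨fun i => σ (Fin.castAdd d i), fun j => σ (Fin.natAdd c j), by
    ext v; induction v using Fin.addCases <;> simp⟩

theorem mon_add (μ μ' : Fin c → ℕ) (ν ν' : Fin d → ℕ) :
    mon μ ν + mon μ' ν' = mon (μ + μ') (ν + ν') := by
  ext v; induction v using Fin.addCases <;> simp

theorem mon_le_mon_iff {μ μ' : Fin c → ℕ} {ν ν' : Fin d → ℕ} :
    mon μ ν ≤ mon μ' ν' ↔ μ ≤ μ' ∧ ν ≤ ν' := by
  simp only [Finsupp.le_def, Fin.forall_fin_add, mon_castAdd, mon_natAdd, Pi.le_def]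

theorem mon_inj {μ μ' : Fin c → ℕ} {ν ν' : Fin d → ℕ} :
    mon μ ν = mon μ' ν' ↔ μ = μ' ∧ ν = ν' := by
  simp only [le_antisymm_iff, mon_le_mon_iff]
  tauto

theorem single_castAdd_eq_mon (i : Fin c) :
    Finsupp.single (Fin.castAdd d i) 1 = mon (Pi.single i 1) 0 := by
  ext v
  induction v using Fin.addCases with
  | left i' => by_cases h : i' = i <;> simp [h, Fin.castAdd_inj]
  | right j => simp [Finsupp.single_apply, Fin.ext_iff]; omega

theorem degE_mon (μ : Fin c → ℕ) (ν : Fin d → ℕ) : degE (mon μ ν) = ∑ i, μ i + ∑ j, ν j := by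
  simp [degE, Fin.sum_univ_add]

theorem valE_mon (μ : Fin c → ℕ) (ν : Fin d → ℕ) :
    valE c d α a (mon μ ν) = ∑ i, μ i • a i + α • ν := by
  funext j
  simp [valE, gens, Fin.sum_univ_add, eVec, Finset.sum_apply, mul_comm]

theorem valE_add (σ τ : Fin (c + d) →₀ ℕ) :
    valE c d α a (σ + τ) = valE c d α a σ + valE c d α a τ := by
  simp [valE, add_smul, Finset.sum_add_distrib]

theorem valE_mon_eq_add_smul (μ : Fin c → ℕ) (ν : Fin d → ℕ) :
    valE c d α a (mon μ ν) = valE c d α a (mon μ 0) + α • ν := by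
  simp [valE_mon]

theorem valE_mon_zero_left (ν : Fin d → ℕ) : valE c d α a (mon 0 ν) = α • ν := by
  simp [valE_mon]

theorem valE_single_castAdd (i : Fin c) :
    valE c d α a (Finsupp.single (Fin.castAdd d i) 1) = a i := by
  simp [single_castAdd_eq_mon, valE_mon, Pi.single_apply]

theorem sum_valE (hdeg : ∀ i, ∑ j, a i j = α) (σ : Fin (c + d) →₀ ℕ) :
    ∑ j, valE c d α a σ j = α * degE σ := by
  obtain ⟨μ, ν, rfl⟩ := exists_eq_mon σ
  simp only [valE_mon, degE_mon, Pi.add_apply, Finset.sum_apply, Pi.smul_apply, smul_eq_mul,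
    Finset.sum_add_distrib, mul_add, Finset.mul_sum]
  rw [Finset.sum_comm]
  simp [← Finset.sum_mul, hdeg, mul_comm]

theorem degE_eq_of_valE_eq (hα : 0 < α) (hdeg : ∀ i, ∑ j, a i j = α)
    {σ τ : Fin (c + d) →₀ ℕ} (h : valE c d α a σ = valE c d α a τ) : degE σ = degE τ :=
  Nat.eq_of_mul_eq_mul_left hα (by rw [← sum_valE hdeg, ← sum_valE hdeg, h])

theorem grevlex_mon_of_ltCls {μ μ' : Fin c → ℕ} {ν ν' : Fin d → ℕ}
    (hd : degE (mon μ ν) = degE (mon μ' ν')) (h : ltCls ν' ν) :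
    grevlex (mon μ ν) (mon μ' ν') := by
  obtain ⟨j, hj, hl⟩ := h
  refine Or.inr ⟨hd, Fin.natAdd c j, by simpa using hj, fun l hjl => ?_⟩
  induction l using Fin.addCases with
  | left i => simp [Fin.lt_def] at hjl; omega
  | right j' => simpa using (hl j' ((Fin.natAdd_lt_natAdd_iff c).mp hjl)).symm

theorem valE_mem {B : AddSubmonoid (Fin d → ℕ)}
    (hBgen : B = AddSubmonoid.closure (Set.range a ∪ Set.range (eVec d α)))
    (σ : Fin (c + d) →₀ ℕ) : valE c d α a σ ∈ B := by
  subst hBgen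
  refine AddSubmonoid.sum_mem _ fun v _ => AddSubmonoid.nsmul_mem _ ?_ _
  apply AddSubmonoid.subset_closure
  induction v using Fin.addCases <;> simp [gens]

theorem eVec_eq_smul (j : Fin d) : eVec d α j = α • Pi.single j 1 := by
  funext l; by_cases h : l = j <;> simp [eVec, h]

theorem exists_eq_smul_of_mem_Amon {z : Fin d → ℕ} (hz : z ∈ Amon d α) : ∃ w, z = α • w := by
  induction hz using AddSubmonoid.closure_induction with
  | mem z hz => obtain ⟨j, rfl⟩ := hz; exact ⟨_, eVec_eq_smul j⟩
  | zero => exact ⟨0, by simp⟩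
  | add x y _ _ hx hy =>
    obtain ⟨u, rfl⟩ := hx
    obtain ⟨v, rfl⟩ := hy
    exact ⟨u + v, (smul_add α u v).symm⟩

end Coordinates

section Classes

variable {d α : ℕ}

theorem Rel.refl (x : Fin d → ℕ) : Rel α x x := fun j => by simp

theorem Rel.symm {x y : Fin d → ℕ} (h : Rel α x y) : Rel α y x := fun j => dvd_sub_comm.mp (h j)

theorem Rel.trans {x y z : Fin d → ℕ} (h₁ : Rel α x y) (h₂ : Rel α y z) : Rel α x z := fun j => by
  simpa using dvd_add (h₁ j) (h₂ j)

theorem rel_of_add_smul_eq {x y ν ν' : Fin d → ℕ} (h : x + α • ν = y + α • ν') : Rel α x y :=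
  fun j => ⟨ν' j - ν j, by have := congrFun h j; simp at this; linarith⟩

theorem Rel.exists_joinSub_eq_smul {x y : Fin d → ℕ} (h : Rel α x y) :
    ∃ u, joinSub x y = α • u := by
  have hdvd : ∀ j, α ∣ joinSub x y j := fun j => by
    rcases le_total (x j) (y j) with hle | hle
    · simp [joinSub, hle]
    · rw [joinSub, max_eq_left hle, ← Int.natCast_dvd_natCast, Nat.cast_sub hle]
      exact h j
  exact ⟨fun j => joinSub x y j / α, funext fun j => (Nat.mul_div_cancel' (hdvd j)).symm⟩

theorem ltCls_joinSub {x y : Fin d → ℕ} (h : ltCls x y) : ltCls (joinSub x y) (joinSub y x) := by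
  obtain ⟨k, hk, hl⟩ := h
  exact ⟨k, by simp [joinSub]; omega, fun l hkl => by simp [joinSub, hl l hkl]⟩

theorem ltCls_of_smul (hα : 0 < α) {u v : Fin d → ℕ} (h : ltCls (α • u) (α • v)) : ltCls u v := by
  obtain ⟨k, hk, hl⟩ := h
  exact ⟨k, lt_of_mul_lt_mul_left' hk, fun l hkl => Nat.eq_of_mul_eq_mul_left hα (hl l hkl)⟩

end Classes

section Standard

variable {c d α : ℕ} {a : Fin c → Fin d → ℕ} {B : AddSubmonoid (Fin d → ℕ)}
  {m : (Fin d → ℕ) → (Fin (c + d) →₀ ℕ)}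

theorem IsFiberMin.eq_of_valE_eq (hα : 0 < α) (hdeg : ∀ i, ∑ j, a i j = α)
    {σ τ : Fin (c + d) →₀ ℕ} (hσ : IsFiberMin (valE c d α a) σ)
    (hτ : IsFiberMin (valE c d α a) τ) (h : valE c d α a σ = valE c d α a τ) : σ = τ := by
  by_contra hne
  rcases grevlex_or_grevlex_of_degE_eq (degE_eq_of_valE_eq hα hdeg h) hne with h' | h'
  · exact hτ σ h h'
  · exact hσ τ h.symm h'

theorem isFiberMin_mon_zero_left (hα : 0 < α) (hdeg : ∀ i, ∑ j, a i j = α) (ν : Fin d → ℕ) :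
    IsFiberMin (valE c d α a) (mon 0 ν) := by
  intro τ hτ hlt
  obtain ⟨μ', ν', rfl⟩ := exists_eq_mon τ
  have hd := degE_eq_of_valE_eq hα hdeg hτ
  have hle : ν' ≤ ν := fun j => by
    have := congrFun hτ j
    simp [valE_mon] at this
    exact Nat.le_of_mul_le_mul_left (by omega) hα
  rcases eq_or_ne ν' ν with rfl | hne
  · have hμ' : μ' = 0 := by
      simpa [degE_mon, Finset.sum_eq_zero_iff, funext_iff] using hd
    subst hμ'
    exact grevlex_irrefl _ hlt
  · exact grevlex_asymm hlt (grevlex_mon_of_ltCls hd.symm (ltCls_of_le_of_ne hle hne))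

theorem eq_zero_of_valE_mon_mem_BA (hα : 0 < α) (hB : ∀ σ, valE c d α a σ ∈ B)
    {μ : Fin c → ℕ} {ν : Fin d → ℕ} (h : valE c d α a (mon μ ν) ∈ BA B α) : ν = 0 := by
  by_contra hν
  obtain ⟨j, hj⟩ := Function.ne_iff.mp hν
  have hsplit : mon μ ν = mon μ (ν - Pi.single j 1) + mon 0 (Pi.single j 1) := by
    rw [mon_add, add_zero]
    congr 1
    funext l
    by_cases hl : l = j
    · subst hl; simp at hj ⊢; omega
    · simp [hl]
  refine h.2 (eVec d α j) (AddSubmonoid.subset_closure ⟨j, rfl⟩) (fun h0 => ?_) _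
    (hB (mon μ (ν - Pi.single j 1))) ?_
  · simpa [eVec, hα.ne'] using congrFun h0 j
  · rw [hsplit, valE_add, valE_mon 0, eVec_eq_smul]
    simp

theorem valE_mon_zero_mem_BA (hα : 0 < α) (hdeg : ∀ i, ∑ j, a i j = α)
    (hB : ∀ σ, valE c d α a σ ∈ B) (hmval : ∀ b ∈ B, valE c d α a (m b) = b)
    {μ : Fin c → ℕ} {ν : Fin d → ℕ} (hσ : IsFiberMin (valE c d α a) (mon μ ν)) :
    valE c d α a (mon μ 0) ∈ BA B α := by
  refine ⟨hB _, fun z hz hz0 y hy hyz => ?_⟩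
  -- `m_y·y^{w+ν}` has the weight of `x^μ y^ν` and more `y`s, so it is smaller
  obtain ⟨w, rfl⟩ := exists_eq_smul_of_mem_Amon hz
  obtain ⟨μ', ν', hmy⟩ := exists_eq_mon (m y)
  have hval : valE c d α a (mon μ' (ν' + w + ν)) = valE c d α a (mon μ ν) := by
    have hy' := hmval y hy
    rw [hmy, valE_mon_eq_add_smul] at hy'
    rw [valE_mon_eq_add_smul, valE_mon_eq_add_smul μ, hyz, ← hy']
    simp only [smul_add]
    abel
  have hne : ν ≠ ν' + w + ν := fun h => hz0 <| by
    funext j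
    have := congrFun h j
    simp at this ⊢
    omega
  have hle : ν ≤ ν' + w + ν := fun j => by simp
  exact hσ _ hval (grevlex_mon_of_ltCls (degE_eq_of_valE_eq hα hdeg hval)
    (ltCls_of_le_of_ne hle hne))

theorem m_valE_eq (hα : 0 < α) (hdeg : ∀ i, ∑ j, a i j = α) (hB : ∀ σ, valE c d α a σ ∈ B)
    (hmval : ∀ b ∈ B, valE c d α a (m b) = b) (hmin : ∀ b ∈ B, IsFiberMin (valE c d α a) (m b))
    {σ : Fin (c + d) →₀ ℕ} (hσ : IsFiberMin (valE c d α a) σ) : m (valE c d α a σ) = σ :=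
  (hmin _ (hB σ)).eq_of_valE_eq hα hdeg hσ (hmval _ (hB σ))

theorem m_smul_eq_mon (hα : 0 < α) (hdeg : ∀ i, ∑ j, a i j = α) (hB : ∀ σ, valE c d α a σ ∈ B)
    (hmval : ∀ b ∈ B, valE c d α a (m b) = b) (hmin : ∀ b ∈ B, IsFiberMin (valE c d α a) (m b))
    (u : Fin d → ℕ) : m (α • u) = mon 0 u := by
  simpa [valE_mon] using m_valE_eq hα hdeg hB hmval hmin (isFiberMin_mon_zero_left hα hdeg u)

theorem exists_m_eq_mon_of_mem_BA (hα : 0 < α) (hB : ∀ σ, valE c d α a σ ∈ B)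
    (hmval : ∀ b ∈ B, valE c d α a (m b) = b) {b : Fin d → ℕ} (hb : b ∈ BA B α) :
    ∃ μ, m b = mon μ 0 := by
  obtain ⟨μ, ν, h⟩ := exists_eq_mon (m b)
  have hν : ν = 0 := eq_zero_of_valE_mon_mem_BA hα hB (by rw [← h, hmval b hb.1]; exact hb)
  exact ⟨μ, hν ▸ h⟩

theorem not_isFiberMin_m_add_m_joinSub (hα : 0 < α) (hdeg : ∀ i, ∑ j, a i j = α)
    (hB : ∀ σ, valE c d α a σ ∈ B) (hmval : ∀ b ∈ B, valE c d α a (m b) = b)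
    (hmin : ∀ b ∈ B, IsFiberMin (valE c d α a) (m b)) {bi bj : Fin d → ℕ} (hi : bi ∈ BA B α)
    (hj : bj ∈ BA B α) (hrel : Rel α bi bj) (hlt : ltCls bi bj) :
    ¬ IsFiberMin (valE c d α a) (m bj + m (joinSub bi bj)) := by
  obtain ⟨u, hu⟩ := hrel.exists_joinSub_eq_smul
  obtain ⟨v, hv⟩ := hrel.symm.exists_joinSub_eq_smul
  obtain ⟨μi, hμi⟩ := exists_m_eq_mon_of_mem_BA hα hB hmval hi
  obtain ⟨μj, hμj⟩ := exists_m_eq_mon_of_mem_BA hα hB hmval hj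
  -- both monomials have weight `bi ∨ bj`
  have hval :
      valE c d α a (m bi + m (joinSub bj bi)) = valE c d α a (m bj + m (joinSub bi bj)) := by
    rw [valE_add, valE_add, hmval _ hi.1, hmval _ hj.1, hu, hv, m_smul_eq_mon hα hdeg hB hmval hmin,
      m_smul_eq_mon hα hdeg hB hmval hmin, valE_mon_zero_left, valE_mon_zero_left, ← hu, ← hv]
    funext j
    simp only [Pi.add_apply, joinSub]
    omega
  rw [hu, m_smul_eq_mon hα hdeg hB hmval hmin, hμj, mon_add] at hval ⊢
  rw [hv, m_smul_eq_mon hα hdeg hB hmval hmin, hμi, mon_add] at hval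
  simp only [add_zero, zero_add] at hval ⊢
  have huv : ltCls u v := ltCls_of_smul hα (hu ▸ hv ▸ ltCls_joinSub hlt)
  exact fun hn => hn _ hval (grevlex_mon_of_ltCls (degE_eq_of_valE_eq hα hdeg hval) huv)

theorem mem_N2set {x y : Fin d → ℕ} (hx : x ∈ BA B α) (hy : y ∈ BA B α) (hrel : Rel α x y)
    (hlt : ltCls x y) : m y + m (joinSub x y) ∈ N2set c α B m :=
  ⟨_, ⟨x, hx, rfl⟩, x, ⟨hx, Rel.refl x⟩, y, ⟨hy, hrel⟩, hlt, rfl⟩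

theorem not_isFiberMin_of_mem_N1set (hα : 0 < α) (hdeg : ∀ i, ∑ j, a i j = α)
    (hB : ∀ σ, valE c d α a σ ∈ B) (hmval : ∀ b ∈ B, valE c d α a (m b) = b)
    (hmin : ∀ b ∈ B, IsFiberMin (valE c d α a) (m b)) {n : Fin (c + d) →₀ ℕ}
    (hn : n ∈ N1set c d α a B m) : ¬ IsFiberMin (valE c d α a) n := by
  obtain ⟨i, b, hb, rfl, hne⟩ := hn
  intro hn
  have := m_valE_eq hα hdeg hB hmval hmin hn
  rw [valE_add, valE_single_castAdd, hmval b hb.1] at this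
  exact hne this.symm

theorem not_isFiberMin_of_mem_N2set (hα : 0 < α) (hdeg : ∀ i, ∑ j, a i j = α)
    (hB : ∀ σ, valE c d α a σ ∈ B) (hmval : ∀ b ∈ B, valE c d α a (m b) = b)
    (hmin : ∀ b ∈ B, IsFiberMin (valE c d α a) (m b)) {n : Fin (c + d) →₀ ℕ}
    (hn : n ∈ N2set c α B m) : ¬ IsFiberMin (valE c d α a) n := by
  obtain ⟨_, ⟨x, -, rfl⟩, bi, ⟨hi, hxi⟩, bj, ⟨hj, hxj⟩, hlt, rfl⟩ := hn
  exact not_isFiberMin_m_add_m_joinSub hα hdeg hB hmval hmin hi hj (hxi.symm.trans hxj) hlt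

theorem m_add_m_joinSub_le (hα : 0 < α) (hdeg : ∀ i, ∑ j, a i j = α)
    (hB : ∀ σ, valE c d α a σ ∈ B) (hmval : ∀ b ∈ B, valE c d α a (m b) = b)
    (hmin : ∀ b ∈ B, IsFiberMin (valE c d α a) (m b)) {μ : Fin c → ℕ} {x ν ν' : Fin d → ℕ}
    (hμ : IsFiberMin (valE c d α a) (mon μ 0)) (h : valE c d α a (mon μ 0) + α • ν = x + α • ν') :
    m (valE c d α a (mon μ 0)) + m (joinSub x (valE c d α a (mon μ 0))) ≤ mon μ ν := by
  obtain ⟨u, hu⟩ := (rel_of_add_smul_eq h.symm).exists_joinSub_eq_smul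
  rw [m_valE_eq hα hdeg hB hmval hmin hμ, hu, m_smul_eq_mon hα hdeg hB hmval hmin, mon_add,
    mon_le_mon_iff, add_zero, zero_add]
  refine ⟨le_rfl, fun j => Nat.le_of_mul_le_mul_left ?_ hα⟩
  have h₁ := congrFun h j
  have h₂ := congrFun hu j
  simp only [Pi.add_apply, Pi.smul_apply, smul_eq_mul, joinSub] at h₁ h₂
  omega

theorem isFiberMin_mon_single_add_of_not_N1_le (hα : 0 < α) (hdeg : ∀ i, ∑ j, a i j = α)
    (hB : ∀ σ, valE c d α a σ ∈ B) (hmval : ∀ b ∈ B, valE c d α a (m b) = b)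
    (hmin : ∀ b ∈ B, IsFiberMin (valE c d α a) (m b)) {μ : Fin c → ℕ} (i : Fin c)
    (hμ : IsFiberMin (valE c d α a) (mon μ 0))
    (hN1 : ∀ n ∈ N1set c d α a B m, ¬ n ≤ mon (Pi.single i 1 + μ) 0) :
    IsFiberMin (valE c d α a) (mon (Pi.single i 1 + μ) 0) := by
  have hb := valE_mon_zero_mem_BA hα hdeg hB hmval hμ
  have hn : Finsupp.single (Fin.castAdd d i) 1 + m (valE c d α a (mon μ 0))
      = mon (Pi.single i 1 + μ) 0 := by
    rw [m_valE_eq hα hdeg hB hmval hmin hμ, single_castAdd_eq_mon, mon_add, add_zero]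
  by_cases heq : Finsupp.single (Fin.castAdd d i) 1 + m (valE c d α a (mon μ 0))
      = m (a i + valE c d α a (mon μ 0))
  · rw [← hn, heq]
    exact hmin _ (B.add_mem (valE_single_castAdd (α := α) (a := a) i ▸ hB _) hb.1)
  · exact absurd (hn ▸ le_rfl) (hN1 _ ⟨i, _, hb, rfl, heq⟩)

theorem isFiberMin_mon_of_not_N2_le (hα : 0 < α) (hdeg : ∀ i, ∑ j, a i j = α)
    (hB : ∀ σ, valE c d α a σ ∈ B) (hmval : ∀ b ∈ B, valE c d α a (m b) = b)
    (hmin : ∀ b ∈ B, IsFiberMin (valE c d α a) (m b)) {μ : Fin c → ℕ} {ν : Fin d → ℕ}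
    (hμ : IsFiberMin (valE c d α a) (mon μ 0)) (hN2 : ∀ n ∈ N2set c α B m, ¬ n ≤ mon μ ν) :
    IsFiberMin (valE c d α a) (mon μ ν) := by
  by_contra hσ
  obtain ⟨μ₂, ν₂, hρ⟩ := exists_eq_mon (m (valE c d α a (mon μ ν)))
  have hρmin : IsFiberMin (valE c d α a) (mon μ₂ ν₂) := hρ ▸ hmin _ (hB _)
  have hρval : valE c d α a (mon μ₂ ν₂) = valE c d α a (mon μ ν) := hρ ▸ hmval _ (hB _)
  have hμ₂ : IsFiberMin (valE c d α a) (mon μ₂ 0) :=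
    hρmin.of_le valE_add (mon_le_mon_iff.mpr ⟨le_rfl, zero_le⟩)
  have hc₀ := valE_mon_zero_mem_BA hα hdeg hB hmval hμ
  have hc₂ := valE_mon_zero_mem_BA hα hdeg hB hmval hρmin
  have hsum : valE c d α a (mon μ 0) + α • ν = valE c d α a (mon μ₂ 0) + α • ν₂ := by
    rw [← valE_mon_eq_add_smul, ← valE_mon_eq_add_smul, hρval]
  rcases eq_or_ne (valE c d α a (mon μ 0)) (valE c d α a (mon μ₂ 0)) with h | h
  · have hν : ν = ν₂ := by
      rw [h] at hsum
      exact funext fun j => Nat.eq_of_mul_eq_mul_left hα (by simpa using congrFun hsum j)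
    have hμμ₂ : μ = μ₂ := (mon_inj.mp (hμ.eq_of_valE_eq hα hdeg hμ₂ h)).1
    exact hσ (hμμ₂ ▸ hν ▸ hρmin)
  · rcases ltCls_or_ltCls_of_ne h with hlt | hlt
    · exact not_isFiberMin_m_add_m_joinSub hα hdeg hB hmval hmin hc₀ hc₂
        (rel_of_add_smul_eq hsum) hlt
        (hρmin.of_le valE_add (m_add_m_joinSub_le hα hdeg hB hmval hmin hμ₂ hsum.symm))
    · exact hN2 _ (mem_N2set hc₂ hc₀ (rel_of_add_smul_eq hsum.symm) hlt)
        (m_add_m_joinSub_le hα hdeg hB hmval hmin hμ hsum)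

theorem isFiberMin_iff_forall_not_le (hα : 0 < α) (hdeg : ∀ i, ∑ j, a i j = α)
    (hB : ∀ σ, valE c d α a σ ∈ B) (hmval : ∀ b ∈ B, valE c d α a (m b) = b)
    (hmin : ∀ b ∈ B, IsFiberMin (valE c d α a) (m b)) {σ : Fin (c + d) →₀ ℕ} :
    IsFiberMin (valE c d α a) σ ↔ ∀ n ∈ N1set c d α a B m ∪ N2set c α B m, ¬ n ≤ σ := by
  constructor
  · rintro hσ n (hn | hn) hle
    · exact not_isFiberMin_of_mem_N1set hα hdeg hB hmval hmin hn (hσ.of_le valE_add hle)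
    · exact not_isFiberMin_of_mem_N2set hα hdeg hB hmval hmin hn (hσ.of_le valE_add hle)
  induction σ using WellFoundedLT.induction with
  | _ σ ih =>
  intro hN
  obtain ⟨μ, ν, rfl⟩ := exists_eq_mon σ
  have ih' : ∀ τ < mon μ ν, IsFiberMin (valE c d α a) τ :=
    fun τ hτ => ih τ hτ fun n hn hle => hN n hn (hle.trans hτ.le)
  rcases eq_or_ne ν 0 with rfl | hν
  · rcases eq_or_ne μ 0 with rfl | hμ
    · exact isFiberMin_mon_zero_left hα hdeg 0
    obtain ⟨i, hi⟩ := Function.ne_iff.mp hμ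
    obtain ⟨μ₁, rfl⟩ : ∃ μ₁, μ = Pi.single i 1 + μ₁ := ⟨μ - Pi.single i 1, by
      funext l; by_cases hl : l = i
      · subst hl; simp at hi ⊢; omega
      · simp [hl]⟩
    refine isFiberMin_mon_single_add_of_not_N1_le hα hdeg hB hmval hmin i (ih' _ ?_)
      fun n hn => hN n (Or.inl hn)
    refine lt_of_le_of_ne (mon_le_mon_iff.mpr ⟨le_add_self, le_rfl⟩) fun h => ?_
    simpa using congrFun (mon_inj.mp h).1 i
  · refine isFiberMin_mon_of_not_N2_le hα hdeg hB hmval hmin (ih' _ ?_)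
      fun n hn => hN n (Or.inr hn)
    exact lt_of_le_of_ne (mon_le_mon_iff.mpr ⟨le_rfl, zero_le⟩)
      fun h => hν (mon_inj.mp h).2.symm

end Standard

end SimplicialToric

theorem initial_ideal_eq_multiples_of_N1_union_N2_general
    (c d α : ℕ) (hα : 0 < α)
    (a : Fin c → Fin d → ℕ) (B : AddSubmonoid (Fin d → ℕ))
    (hBgen : B = AddSubmonoid.closure (Set.range a ∪ Set.range (eVec d α)))
    (hdeg : ∀ i, ∑ j, a i j = α)
    (m : (Fin d → ℕ) → (Fin (c + d) →₀ ℕ))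
    (hmval : ∀ b ∈ B, valE c d α a (m b) = b)
    (hmmin : ∀ b ∈ B, ∀ σ, valE c d α a σ = b → m b = σ ∨ grevlex (m b) σ)
    (K : Type*) [Field K]
    (π : MvPolynomial (Fin (c + d)) K →ₐ[K] AddMonoidAlgebra K (Fin d → ℕ))
    (hπ : ∀ v, π (MvPolynomial.X v) = AddMonoidAlgebra.of' K (Fin d → ℕ) (gens c d α a v)) :
    (∀ σ : Fin (c + d) →₀ ℕ,
      MvPolynomial.monomial σ (1 : K) ∈ initialIdeal (RingHom.ker π.toRingHom) ↔
        ∃ n ∈ N1set c d α a B m ∪ N2set c α B m, ∃ ρ, σ = n + ρ) ∧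
    ∃ (r : ℕ) (ns : Fin r → (Fin (c + d) →₀ ℕ)),
      (∀ k, ns k ∈ N1set c d α a B m ∪ N2set c α B m) ∧
      initialIdeal (RingHom.ker π.toRingHom)
        = Ideal.span (Set.range fun k => MvPolynomial.monomial (ns k) (1 : K)) := by
  have hB : ∀ σ, valE c d α a σ ∈ B := valE_mem hBgen
  have hmin : ∀ b ∈ B, IsFiberMin (valE c d α a) (m b) := fun b hb τ hτ hlt =>
    (hmmin b hb τ (hτ.trans (hmval b hb))).elim (fun h => grevlex_irrefl τ (h ▸ hlt))
      (grevlex_asymm hlt)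
  have hmem : ∀ σ, MvPolynomial.monomial σ (1 : K) ∈ initialIdeal (RingHom.ker π.toRingHom) ↔
      ∃ n ∈ N1set c d α a B m ∪ N2set c α B m, n ≤ σ := fun σ =>
    (monomial_mem_initialIdeal_ker_iff valE_add (map_monomial_one_of_map_X hπ)).trans <| by
      simp [isFiberMin_iff_forall_not_le hα hdeg hB hmval hmin]
  refine ⟨fun σ => (hmem σ).trans (by simp only [le_iff_exists_add]), ?_⟩
  obtain ⟨r, ns, hns, hspan⟩ := Ideal.exists_fin_span_image_eq
    (fun n => MvPolynomial.monomial n (1 : K)) (N1set c d α a B m ∪ N2set c α B m)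
  exact ⟨r, ns, hns, (initialIdeal_eq_span_of_monomial_mem_iff hmem).trans hspan⟩

/-- `M_{in_≺(ker π)} = ∪_{n ∈ N₁∪N₂} M_{nS}`; in particular the initial
ideal is generated by finitely many elements of `N₁ ∪ N₂`. -/
theorem initial_ideal_eq_multiples_of_N1_union_N2
    (c d α : ℕ) (hα : 0 < α)
    (a : Fin c → Fin d → ℕ) (B : AddSubmonoid (Fin d → ℕ))
    (hBgen : B = AddSubmonoid.closure (Set.range a ∪ Set.range (eVec d α)))
    (hhilb : Hilb B = Set.range a ∪ Set.range (eVec d α))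
    (hdeg : ∀ i, ∑ j, a i j = α)
    (m : (Fin d → ℕ) → (Fin (c + d) →₀ ℕ))
    (hmval : ∀ b ∈ B, valE c d α a (m b) = b)
    (hmmin : ∀ b ∈ B, ∀ σ, valE c d α a σ = b → m b = σ ∨ grevlex (m b) σ)
    (K : Type*) [Field K]
    (π : MvPolynomial (Fin (c + d)) K →ₐ[K] AddMonoidAlgebra K (Fin d → ℕ))
    (hπ : ∀ v, π (MvPolynomial.X v) = AddMonoidAlgebra.of' K (Fin d → ℕ) (gens c d α a v)) :
    (∀ σ : Fin (c + d) →₀ ℕ,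
      MvPolynomial.monomial σ (1 : K) ∈ initialIdeal (RingHom.ker π.toRingHom) ↔
        ∃ n ∈ N1set c d α a B m ∪ N2set c α B m, ∃ ρ, σ = n + ρ) ∧
    ∃ (r : ℕ) (ns : Fin r → (Fin (c + d) →₀ ℕ)),
      (∀ k, ns k ∈ N1set c d α a B m ∪ N2set c α B m) ∧
      initialIdeal (RingHom.ker π.toRingHom)
        = Ideal.span (Set.range fun k => MvPolynomial.monomial (ns k) (1 : K)) :=
  initial_ideal_eq_multiples_of_N1_union_N2_general c d α hα a B hBgen hdeg m hmval hmmin K π hπ
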